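/- With Δ and ⟨·,·⟩ as the signature-(e, n−e) Laplacian and Hermitian form on ℂ^n, for any fixed vector p ∈ ℂ^n one has Δ²{⟨z,z⟩²·⟨p,z⟩} = 2(n+1)(n+2)·⟨p,z⟩. -/

import Mathlib

/-!
Write `Q = ⟨z,z⟩`, `P = ⟨p,z⟩` and `Γ(f,g) = Σ ε_k (∂_{z^k} f ∂_{z̄^k} g + ∂_{z̄^k} f ∂_{z^k} g)`,
so that `Δ(fg) = Δf·g + f·Δg + Γ(f,g)` and `Γ(·,g)` is a derivation. Since `ε_k² = 1`,
`ΔQ = n`, `ΔP = 0`, `Γ(Q,Q) = 2Q` and `Γ(Q,P) = P`; induction on `m` then gives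
`Δ(Q^(m+1)) = (m+1)(n+m) Q^m` and `Δ(Q^(m+1) P) = (m+1)(n+m+1) Q^m P`.
Applying the latter with `m = 1` and `m = 0` yields the factor `2(n+2)·(n+1)`.
-/
open MvPolynomial

/-- Signature coefficients of the Hermitian form of signature `(e, n-e)`. -/
noncomputable def eps (n e : ℕ) (k : Fin n) : ℂ := if (k : ℕ) < e then 1 else -1

/-- The polynomial `⟨z,z⟩ = Σ ε_k z^k z̄^k`. -/
noncomputable def hermPoly (n e : ℕ) : MvPolynomial (Fin n ⊕ Fin n) ℂ :=
  ∑ k : Fin n, C (eps n e k) * X (Sum.inl k) * X (Sum.inr k)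

/-- The polynomial `⟨p,z⟩ = Σ ε_k p^k z̄^k` for a fixed vector `p ∈ ℂⁿ`
(linear in `p`, antilinear in `z`). -/
noncomputable def hermPolyP (n e : ℕ) (p : Fin n → ℂ) : MvPolynomial (Fin n ⊕ Fin n) ℂ :=
  ∑ k : Fin n, C (eps n e k) * C (p k) * X (Sum.inr k)

/-- The signature-`(e, n-e)` Laplacian `Δ = Σ ε_k ∂²/∂z^k ∂z̄^k`. -/
noncomputable def Lap (n e : ℕ) (P : MvPolynomial (Fin n ⊕ Fin n) ℂ) :
    MvPolynomial (Fin n ⊕ Fin n) ℂ :=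
  ∑ k : Fin n, C (eps n e k) * pderiv (Sum.inl k) (pderiv (Sum.inr k) P)

noncomputable def gradPairing (n e : ℕ) (f g : MvPolynomial (Fin n ⊕ Fin n) ℂ) :
    MvPolynomial (Fin n ⊕ Fin n) ℂ :=
  ∑ k : Fin n, C (eps n e k) *
    (pderiv (Sum.inl k) f * pderiv (Sum.inr k) g + pderiv (Sum.inr k) f * pderiv (Sum.inl k) g)

section

variable {n : ℕ} (e : ℕ)

lemma eps_mul_self (k : Fin n) : eps n e k * eps n e k = 1 := by
  unfold eps; split <;> norm_num

lemma C_eps_mul_self (k : Fin n) :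
    (C (eps n e k) * C (eps n e k) : MvPolynomial (Fin n ⊕ Fin n) ℂ) = 1 := by
  rw [← map_mul, eps_mul_self, map_one]

lemma Lap_C_mul (c : ℂ) (f : MvPolynomial (Fin n ⊕ Fin n) ℂ) :
    Lap n e (C c * f) = C c * Lap n e f := by
  simp only [Lap, pderiv_C_mul, Finset.mul_sum]
  exact Finset.sum_congr rfl fun _ _ ↦ mul_left_comm _ _ _

lemma Lap_mul (f g : MvPolynomial (Fin n ⊕ Fin n) ℂ) :
    Lap n e (f * g) = Lap n e f * g + f * Lap n e g + gradPairing n e f g := by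
  simp only [Lap, gradPairing, Derivation.leibniz, map_add, smul_eq_mul, Finset.sum_mul,
    Finset.mul_sum, ← Finset.sum_add_distrib]
  exact Finset.sum_congr rfl fun _ _ ↦ by ring

lemma gradPairing_mul_left (f g h : MvPolynomial (Fin n ⊕ Fin n) ℂ) :
    gradPairing n e (f * g) h = f * gradPairing n e g h + g * gradPairing n e f h := by
  simp only [gradPairing, Derivation.leibniz, smul_eq_mul, Finset.mul_sum,
    ← Finset.sum_add_distrib]
  exact Finset.sum_congr rfl fun _ _ ↦ by ring

lemma gradPairing_pow_succ_left (f h : MvPolynomial (Fin n ⊕ Fin n) ℂ) (m : ℕ) :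
    gradPairing n e (f ^ (m + 1)) h = C ((m : ℂ) + 1) * f ^ m * gradPairing n e f h := by
  induction m with
  | zero => simp
  | succ m ih =>
    rw [pow_succ, gradPairing_mul_left, ih]
    simp only [Nat.cast_succ, map_add, map_one]
    ring

lemma pderiv_inl_hermPoly (j : Fin n) :
    pderiv (Sum.inl j) (hermPoly n e) = C (eps n e j) * X (Sum.inr j) := by
  simp [hermPoly, pderiv_X, Pi.single_apply, mul_comm]

lemma pderiv_inr_hermPoly (j : Fin n) :
    pderiv (Sum.inr j) (hermPoly n e) = C (eps n e j) * X (Sum.inl j) := by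
  simp [hermPoly, pderiv_X, Pi.single_apply]

lemma pderiv_inl_hermPolyP (p : Fin n → ℂ) (j : Fin n) :
    pderiv (Sum.inl j) (hermPolyP n e p) = 0 := by
  simp [hermPolyP, pderiv_X]

lemma pderiv_inr_hermPolyP (p : Fin n → ℂ) (j : Fin n) :
    pderiv (Sum.inr j) (hermPolyP n e p) = C (eps n e j) * C (p j) := by
  simp [hermPolyP, pderiv_X, Pi.single_apply]

lemma Lap_hermPoly : Lap n e (hermPoly n e) = C (n : ℂ) := by
  simp [Lap, pderiv_inr_hermPoly, pderiv_X, C_eps_mul_self]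

lemma Lap_hermPolyP (p : Fin n → ℂ) : Lap n e (hermPolyP n e p) = 0 := by
  simp [Lap, pderiv_inr_hermPolyP]

lemma gradPairing_hermPoly_hermPoly :
    gradPairing n e (hermPoly n e) (hermPoly n e) = 2 * hermPoly n e := by
  simp only [gradPairing, pderiv_inl_hermPoly, pderiv_inr_hermPoly]
  rw [hermPoly, Finset.mul_sum]
  refine Finset.sum_congr rfl fun k _ ↦ ?_
  linear_combination (2 * C (eps n e k) * X (Sum.inl k) * X (Sum.inr k)) *
    C_eps_mul_self e k

lemma gradPairing_hermPoly_hermPolyP (p : Fin n → ℂ) :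
    gradPairing n e (hermPoly n e) (hermPolyP n e p) = hermPolyP n e p := by
  simp only [gradPairing, pderiv_inl_hermPoly, pderiv_inr_hermPolyP, pderiv_inl_hermPolyP,
    mul_zero, add_zero]
  rw [hermPolyP]
  refine Finset.sum_congr rfl fun k _ ↦ ?_
  linear_combination (C (eps n e k) * C (p k) * X (Sum.inr k)) *
    C_eps_mul_self e k

lemma Lap_hermPoly_pow_succ (m : ℕ) :
    Lap n e (hermPoly n e ^ (m + 1)) =
      C (((m : ℂ) + 1) * ((n : ℂ) + m)) * hermPoly n e ^ m := by
  induction m with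
  | zero => simp [Lap_hermPoly]
  | succ m ih =>
    rw [pow_succ, Lap_mul, ih, Lap_hermPoly, gradPairing_pow_succ_left,
      gradPairing_hermPoly_hermPoly]
    simp only [Nat.cast_succ, map_add, map_mul, map_one, map_natCast]
    ring

lemma Lap_hermPoly_pow_succ_mul_hermPolyP (p : Fin n → ℂ) (m : ℕ) :
    Lap n e (hermPoly n e ^ (m + 1) * hermPolyP n e p) =
      C (((m : ℂ) + 1) * ((n : ℂ) + m + 1)) * (hermPoly n e ^ m * hermPolyP n e p) := by
  rw [Lap_mul, Lap_hermPoly_pow_succ, Lap_hermPolyP, gradPairing_pow_succ_left,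
    gradPairing_hermPoly_hermPolyP]
  simp only [map_add, map_mul, map_one, map_natCast]
  ring

end

theorem stmt2_general (n e : ℕ) (p : Fin n → ℂ) :
    Lap n e (Lap n e (hermPoly n e ^ 2 * hermPolyP n e p)) =
      C (2 * ((n : ℂ) + 1) * ((n : ℂ) + 2)) * hermPolyP n e p := by
  have h₀ := Lap_hermPoly_pow_succ_mul_hermPolyP e p 0
  have h₁ := Lap_hermPoly_pow_succ_mul_hermPolyP e p 1
  rw [zero_add, pow_one, pow_zero, one_mul] at h₀
  rw [h₁, Lap_C_mul, pow_one, h₀, ← mul_assoc, ← map_mul]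
  congr 2
  push_cast
  ring

/-- `Δ²{⟨z,z⟩²⟨p,z⟩} = 2(n+1)(n+2)⟨p,z⟩`. -/
theorem stmt2 (n e : ℕ) (he : e ≤ n) (p : Fin n → ℂ) :
    Lap n e (Lap n e (hermPoly n e ^ 2 * hermPolyP n e p)) =
      C (2 * ((n : ℂ) + 1) * ((n : ℂ) + 2)) * hermPolyP n e p :=
  stmt2_general n e p
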